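/- Consider a multi-leader congestion game with an adversary with n ≥ 2 players and resources ordered so that a_1 ≤ a_2 ≤ … ≤ a_m. Let x' be a strategy profile of all n players, let k be a distinguished player, and let x denote the induced (n−1)-player profile obtained by removing player k (all loads, costs and equilibrium notions for x are computed in the game on the remaining n−1 players with the same resources, coefficients and budget). Assume: (1) the loads of x are nonincreasing, ℓ_1(x) ≥ ℓ_2(x) ≥ … ≥ ℓ_m(x); (2) x is a K-approximate pure Nash equilibrium of the (n−1)-player game; (3) x'_k is a best response for player k, i.e., π_k(x') ≤ π_k(r, x'_{−k}) for every resource r. Suppose some player i ≠ k and some resource r satisfy π_i(x') > K·π_i(r, x'_{−i}). Write M = M(x). Then x_i ≠ x'_k, r ≠ x'_k, and one of the following three cases holds: (a) ℓ_{x'_k}(x) = M − 2, ℓ_{x_i}(x) = M, ℓ_r(x') = M − 2, and x_i is the only resource with load M in x; (b) ℓ_{x'_k}(x) = M − 1, ℓ_{x_i}(x) ≤ M − 1, and ℓ_r(x') = M − 1; (c) ℓ_{x'_k}(x) = M, and either (ℓ_{x_i}(x) ≤ M and ℓ_r(x') = M) or (ℓ_{x_i}(x) ≤ M − 1 and ℓ_r(x')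 = M − 1). -/
import Mathlib


open Finset

variable {ι : Type*} {m : ℕ}

/-- The load of resource `r` under strategy profile `x`. -/
def load [Fintype ι] [DecidableEq ι] (x : ι → Fin m) (r : Fin m) : ℕ :=
  (Finset.univ.filter (fun i => x i = r)).card

/-- The maximum load `M(x)`. -/
def maxLoad [Fintype ι] [DecidableEq ι] (x : ι → Fin m) : ℕ :=
  Finset.univ.sup (fun r => load x r)

/-- The number `p(x)` of resources with maximum load. -/
def numMax [Fintype ι] [DecidableEq ι] (x : ι → Fin m) : ℕ :=
  (Finset.univ.filter (fun r => load x r = maxLoad x)).card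

/-- The attack term `κ*_r(x)`. -/
noncomputable def kappa [Fintype ι] [DecidableEq ι] (B : ℝ) (x : ι → Fin m) (r : Fin m) : ℝ :=
  if load x r = maxLoad x then B / (numMax x : ℝ) else 0

/-- The cost `c_r(x)` of resource `r` under profile `x`. -/
noncomputable def rcost [Fintype ι] [DecidableEq ι] (a : Fin m → ℝ) (B : ℝ)
    (x : ι → Fin m) (r : Fin m) : ℝ :=
  a r * (load x r : ℝ) + kappa B x r

/-- The private cost `π_i(x)` of player `i` under profile `x`. -/
noncomputable def pcost [Fintype ι] [DecidableEq ι] (a : Fin m → ℝ) (B : ℝ)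
    (x : ι → Fin m) (i : ι) : ℝ :=
  rcost a B x (x i)

/-- `x` is an `α`-approximate pure Nash equilibrium. -/
def isApproxPNE [Fintype ι] [DecidableEq ι] (a : Fin m → ℝ) (B : ℝ) (α : ℝ)
    (x : ι → Fin m) : Prop :=
  ∀ (i : ι) (r : Fin m), pcost a B x i ≤ α * pcost a B (Function.update x i r) i

/-- `r` is the only resource with maximum load in `x`. -/
def onlyMax [Fintype ι] [DecidableEq ι] (x : ι → Fin m) (r : Fin m) : Prop :=
  load x r = maxLoad x ∧ ∀ s : Fin m, load x s = maxLoad x → s = r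

section AuxLemmas

variable {ι : Type*} {m : ℕ} [Fintype ι] [DecidableEq ι]

lemma load_le_maxLoad (x : ι → Fin m) (r : Fin m) : load x r ≤ maxLoad x :=
  Finset.le_sup (Finset.mem_univ r)

lemma exists_load_eq_maxLoad [Nonempty (Fin m)] (x : ι → Fin m) :
    ∃ s, load x s = maxLoad x := by
  obtain ⟨b, -, hb⟩ := Finset.exists_mem_eq_sup (Finset.univ : Finset (Fin m))
    Finset.univ_nonempty (load x)
  exact ⟨b, hb.symm⟩

lemma one_le_numMax [Nonempty (Fin m)] (x : ι → Fin m) : 1 ≤ numMax x := by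
  obtain ⟨s, hs⟩ := exists_load_eq_maxLoad x
  have hmem : s ∈ Finset.univ.filter (fun r => load x r = maxLoad x) := by
    simp [hs]
  exact Finset.card_pos.mpr ⟨s, hmem⟩

lemma kappa_nonneg {B : ℝ} (hB : 0 ≤ B) (x : ι → Fin m) (r : Fin m) : 0 ≤ kappa B x r := by
  unfold kappa
  split
  · exact div_nonneg hB (by positivity)
  · exact le_refl 0

lemma pcost_nonneg {a : Fin m → ℝ} (ha0 : ∀ r, 0 ≤ a r) {B : ℝ} (hB : 0 ≤ B)
    (x : ι → Fin m) (i : ι) : 0 ≤ pcost a B x i := by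
  unfold pcost rcost
  have := kappa_nonneg hB x (x i)
  have := ha0 (x i)
  positivity

lemma maxLoad_eq_of {x : ι → Fin m} {M : ℕ} (h1 : ∀ s, load x s ≤ M)
    (h2 : ∃ s, load x s = M) : maxLoad x = M := by
  obtain ⟨s, hs⟩ := h2
  exact le_antisymm (Finset.sup_le fun t _ => h1 t) (hs ▸ Finset.le_sup (Finset.mem_univ s))

lemma load_update (w : ι → Fin m) (j : ι) (ρ : Fin m) (s : Fin m) :
    load (Function.update w j ρ) s + (if w j = s then 1 else 0)
      = load w s + (if ρ = s then 1 else 0) := by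
  unfold load
  rw [Finset.card_filter, Finset.card_filter,
    ← Finset.add_sum_erase _ _ (Finset.mem_univ j),
    ← Finset.add_sum_erase _ (fun i => if w i = s then (1:ℕ) else 0) (Finset.mem_univ j)]
  rw [Finset.sum_congr rfl (fun i hi => by
    rw [Function.update_of_ne (Finset.ne_of_mem_erase hi)])]
  simp only [Function.update_self]
  ring

lemma load_ext {n : ℕ} {k : Fin n} (w : {i : Fin n // i ≠ k} → Fin m)
    (w' : Fin n → Fin m) (hw : ∀ j : {i : Fin n // i ≠ k}, w j = w' j.1) (s : Fin m) :
    load w' s = load w s + (if w' k = s then 1 else 0) := by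
  unfold load
  rw [Finset.card_filter, Finset.card_filter,
    ← Finset.add_sum_erase _ _ (Finset.mem_univ k)]
  rw [Finset.sum_subtype (p := fun i => i ≠ k) (Finset.univ.erase k)
    (fun x => by simp [Finset.mem_erase]) (fun i => if w' i = s then (1:ℕ) else 0)]
  rw [Finset.sum_congr rfl (fun j hj => by rw [← hw j])]
  have : (Finset.univ : Finset {i : Fin n // i ≠ k}).sum (fun j => if w j = s then (1:ℕ) else 0)
      = ∑ j : {i : Fin n // i ≠ k}, if w j = s then (1:ℕ) else 0 := rfl
  omega

lemma maxLoad_congr {ι' : Type*} [Fintype ι'] [DecidableEq ι'] {w₁ : ι → Fin m}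
    {w₂ : ι' → Fin m} (h : ∀ s, load w₁ s = load w₂ s) : maxLoad w₁ = maxLoad w₂ := by
  unfold maxLoad
  exact Finset.sup_congr rfl (fun s _ => h s)

lemma numMax_congr {ι' : Type*} [Fintype ι'] [DecidableEq ι'] {w₁ : ι → Fin m}
    {w₂ : ι' → Fin m} (h : ∀ s, load w₁ s = load w₂ s) : numMax w₁ = numMax w₂ := by
  unfold numMax
  rw [Finset.filter_congr (fun s _ => iff_of_eq (by rw [h s, maxLoad_congr h]))]

lemma kappa_congr {ι' : Type*} [Fintype ι'] [DecidableEq ι'] {w₁ : ι → Fin m}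
    {w₂ : ι' → Fin m} (h : ∀ s, load w₁ s = load w₂ s) (B : ℝ) (s : Fin m) :
    kappa B w₁ s = kappa B w₂ s := by
  unfold kappa
  rw [h s, maxLoad_congr h, numMax_congr h]

end AuxLemmas

section AddLemmas

variable {ι₁ ι₂ : Type*} {m : ℕ} [Fintype ι₁] [DecidableEq ι₁] [Fintype ι₂] [DecidableEq ι₂]
variable {w₁ : ι₁ → Fin m} {w₂ : ι₂ → Fin m} {t : Fin m}

lemma addK_max (hL : ∀ s, load w₂ s = load w₁ s + if t = s then 1 else 0)
    (ht : load w₁ t = maxLoad w₁) :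
    maxLoad w₂ = maxLoad w₁ + 1 ∧ numMax w₂ = 1 ∧
      (∀ (B : ℝ) (s : Fin m), s ≠ t → kappa B w₂ s = 0) ∧ (∀ B : ℝ, kappa B w₂ t = B) := by
  have hM2 : maxLoad w₂ = maxLoad w₁ + 1 := by
    apply maxLoad_eq_of
    · intro s
      have h1 := load_le_maxLoad w₁ s
      have h2 := hL s
      split at h2 <;> omega
    · exact ⟨t, by rw [hL t, if_pos rfl, ht]⟩
  have hfil : Finset.univ.filter (fun s => load w₂ s = maxLoad w₂) = {t} := by
    ext s
    simp only [Finset.mem_filter, Finset.mem_univ, true_and, Finset.mem_singleton, hM2]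
    constructor
    · intro h
      by_contra hs
      rw [hL s, if_neg (fun h' => hs h'.symm)] at h
      have := load_le_maxLoad w₁ s
      omega
    · intro h
      subst h
      rw [hL s, if_pos rfl, ht]
  have hnm : numMax w₂ = 1 := by rw [numMax, hfil, Finset.card_singleton]
  refine ⟨hM2, hnm, fun B s hs => ?_, fun B => ?_⟩
  · rw [kappa, if_neg]
    rw [hL s, if_neg (fun h' => hs h'.symm), hM2]
    have := load_le_maxLoad w₁ s
    omega
  · rw [kappa, if_pos, hnm]
    · norm_num
    · rw [hL t, if_pos rfl, ht, hM2]

lemma addK_next (hL : ∀ s, load w₂ s = load w₁ s + if t = s then 1 else 0)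
    (ht : load w₁ t + 1 = maxLoad w₁) :
    maxLoad w₂ = maxLoad w₁ ∧ numMax w₂ = numMax w₁ + 1 := by
  have hM2 : maxLoad w₂ = maxLoad w₁ := by
    apply maxLoad_eq_of
    · intro s
      have h1 := load_le_maxLoad w₁ s
      have h2 := hL s
      by_cases hs : t = s
      · subst hs; rw [if_pos rfl] at h2; omega
      · rw [if_neg hs] at h2; omega
    · exact ⟨t, by rw [hL t, if_pos rfl]; omega⟩
  have hfil : Finset.univ.filter (fun s => load w₂ s = maxLoad w₂)
      = insert t (Finset.univ.filter (fun s => load w₁ s = maxLoad w₁)) := by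
    ext s
    simp only [Finset.mem_filter, Finset.mem_univ, true_and, Finset.mem_insert, hM2]
    by_cases hs : s = t
    · subst hs
      simp only [true_or, iff_true]
      rw [hL s, if_pos rfl]; omega
    · rw [hL s, if_neg (fun h' => hs h'.symm)]
      simp [hs]
  have hnm : numMax w₂ = numMax w₁ + 1 := by
    rw [numMax, hfil, Finset.card_insert_of_notMem, numMax]
    simp only [Finset.mem_filter, Finset.mem_univ, true_and]
    omega
  exact ⟨hM2, hnm⟩

lemma addK_low [Nonempty (Fin m)] (hL : ∀ s, load w₂ s = load w₁ s + if t = s then 1 else 0)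
    (ht : load w₁ t + 1 < maxLoad w₁) :
    maxLoad w₂ = maxLoad w₁ ∧ numMax w₂ = numMax w₁ ∧
      ∀ (B : ℝ) (s : Fin m), s ≠ t → kappa B w₂ s = kappa B w₁ s := by
  obtain ⟨s₀, hs₀⟩ := exists_load_eq_maxLoad w₁
  have hs₀t : s₀ ≠ t := fun h => by subst h; omega
  have hM2 : maxLoad w₂ = maxLoad w₁ := by
    apply maxLoad_eq_of
    · intro s
      have h1 := load_le_maxLoad w₁ s
      have h2 := hL s
      by_cases hs : t = s
      · subst hs; rw [if_pos rfl] at h2; omega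
      · rw [if_neg hs] at h2; omega
    · exact ⟨s₀, by rw [hL s₀, if_neg (fun h => hs₀t h.symm)]; omega⟩
  have hload : ∀ s, s ≠ t → load w₂ s = load w₁ s := by
    intro s hs
    rw [hL s, if_neg (fun h => hs h.symm)]
    omega
  have hfil : Finset.univ.filter (fun s => load w₂ s = maxLoad w₂)
      = Finset.univ.filter (fun s => load w₁ s = maxLoad w₁) := by
    apply Finset.filter_congr
    intro s _
    by_cases hs : s = t
    · subst hs
      rw [hL s, if_pos rfl, hM2]
      constructor <;> intro h <;> omega
    · rw [hload s hs, hM2]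
  have hnm : numMax w₂ = numMax w₁ := by rw [numMax, numMax, hfil]
  refine ⟨hM2, hnm, fun B s hs => ?_⟩
  rw [kappa, kappa, hload s hs, hM2, hnm]

lemma kappa_add_le [Nonempty (Fin m)] {B : ℝ} (hB : 0 ≤ B)
    (hL : ∀ s, load w₂ s = load w₁ s + if t = s then 1 else 0)
    {s : Fin m} (hs : s ≠ t) : kappa B w₂ s ≤ kappa B w₁ s := by
  have h0 := load_le_maxLoad w₁ t
  rcases Nat.lt_or_ge (load w₁ t + 1) (maxLoad w₁) with h | h
  · rw [(addK_low hL h).2.2 B s hs]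
  rcases Nat.eq_or_lt_of_le h0 with h1 | h1
  · rw [(addK_max hL h1).2.2.1 B s hs]
    exact kappa_nonneg hB w₁ s
  · have h2 : load w₁ t + 1 = maxLoad w₁ := by omega
    obtain ⟨hM2, hnm⟩ := addK_next hL h2
    have hcond : load w₂ s = load w₁ s := by
      rw [hL s, if_neg (fun h' => hs h'.symm)]
      omega
    rw [kappa, kappa, hM2, hnm, hcond]
    by_cases hmax : load w₁ s = maxLoad w₁
    · rw [if_pos hmax, if_pos hmax]
      have hp : (1:ℝ) ≤ (numMax w₁ : ℝ) := by exact_mod_cast one_le_numMax w₁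
      push_cast
      gcongr
      linarith
    · rw [if_neg hmax, if_neg hmax]

lemma kappa_le_kappa_add_self [Nonempty (Fin m)] {B : ℝ} (hB : 0 ≤ B)
    (hL : ∀ s, load w₂ s = load w₁ s + if t = s then 1 else 0) :
    kappa B w₁ t ≤ kappa B w₂ t := by
  by_cases h : load w₁ t = maxLoad w₁
  · rw [(addK_max hL h).2.2.2 B]
    rw [kappa, if_pos h]
    have hp : (1:ℝ) ≤ (numMax w₁ : ℝ) := by exact_mod_cast one_le_numMax w₁
    exact div_le_self hB hp
  · rw [kappa, if_neg h]
    exact kappa_nonneg hB w₂ t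

end AddLemmas

lemma update_ext {n m : ℕ} {k : Fin n} (x : {i : Fin n // i ≠ k} → Fin m)
    (x' : Fin n → Fin m) (hx : ∀ j : {i : Fin n // i ≠ k}, x j = x' j.1)
    (i : Fin n) (hik : i ≠ k) (r : Fin m) :
    ∀ j : {i0 : Fin n // i0 ≠ k},
      Function.update x ⟨i, hik⟩ r j = Function.update x' i r j.1 := by
  rintro ⟨j, hj⟩
  by_cases hji : j = i
  · subst hji
    simp only [Function.update_self]
  · rw [Function.update_of_ne (by simp [Subtype.ext_iff, hji]),
      Function.update_of_ne hji, hx ⟨j, hj⟩]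

set_option maxHeartbeats 2000000 in
theorem newly_unhappy_player_cases_aux (n m : ℕ) (hn : 2 ≤ n)
    (a : Fin m → ℝ) (ha0 : ∀ r, 0 ≤ a r) (ha : Monotone a)
    (B : ℝ) (hB : 0 < B) (K : ℝ) (hK : K ^ 3 = K ^ 2 / 2 + 1)
    (x' : Fin n → Fin m) (k : Fin n)
    (x : {i : Fin n // i ≠ k} → Fin m)
    (hx : ∀ i : {i : Fin n // i ≠ k}, x i = x' i.1)
    (hdec : ∀ r s : Fin m, r ≤ s → load x s ≤ load x r)
    (hpne : isApproxPNE a B K x)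
    (hbr : ∀ r : Fin m, pcost a B x' k ≤ pcost a B (Function.update x' k r) k)
    (i : Fin n) (hik : i ≠ k) (r : Fin m)
    (hdev : pcost a B x' i > K * pcost a B (Function.update x' i r) i) :
    x' i ≠ x' k ∧ r ≠ x' k ∧
      ((load x (x' k) + 2 = maxLoad x ∧ load x (x' i) = maxLoad x ∧
          load x' r + 2 = maxLoad x ∧ onlyMax x (x' i)) ∨
       (load x (x' k) + 1 = maxLoad x ∧ load x (x' i) < maxLoad x ∧
          load x' r + 1 = maxLoad x) ∨
       (load x (x' k) = maxLoad x ∧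
          ((load x (x' i) ≤ maxLoad x ∧ load x' r = maxLoad x) ∨
           (load x (x' i) < maxLoad x ∧ load x' r + 1 = maxLoad x)))) := by
  classical
  haveI : Nonempty (Fin m) := ⟨r⟩
  have hB0 : (0:ℝ) ≤ B := le_of_lt hB
  have hK1 : 1 < K := by
    nlinarith [hK, sq_nonneg K, sq_nonneg (K - 1), sq_nonneg (K + 1), sq_nonneg (K^2 - 1)]
  have hK0 : (0:ℝ) < K := by linarith
  have hK32 : K < 3 / 2 := by
    nlinarith [hK, sq_nonneg K, sq_nonneg (K - 3/2), sq_nonneg (K + 1)]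
  obtain ⟨t, ht⟩ : ∃ t, x' k = t := ⟨_, rfl⟩
  obtain ⟨u, hu⟩ : ∃ u, x' i = u := ⟨_, rfl⟩
  rw [ht, hu]
  have hxu : x ⟨i, hik⟩ = u := by rw [hx ⟨i, hik⟩, hu]
  -- Step 1 : u ≠ t
  have hut : u ≠ t := by
    intro hutt
    have hik' : x' i = x' k := by rw [hu, ht, hutt]
    have hload : ∀ s, load (Function.update x' i r) s = load (Function.update x' k r) s := by
      intro s
      have h1 := load_update x' i r s
      have h2 := load_update x' k r s
      rw [hik'] at h1
      omega
    have hpc : pcost a B (Function.update x' i r) i = pcost a B (Function.update x' k r) k := by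
      unfold pcost rcost
      rw [Function.update_self, Function.update_self, hload r, kappa_congr hload B r]
    have h1 := hbr r
    have h2 : pcost a B x' k = pcost a B x' i := by unfold pcost; rw [hik']
    have h3 : 0 ≤ pcost a B (Function.update x' i r) i := pcost_nonneg ha0 hB0 _ _
    nlinarith [hdev]
  -- Step 1b : r ≠ u
  have hru : r ≠ u := by
    intro hruu
    have hupd : Function.update x' i r = x' := by
      rw [hruu, ← hu]; exact Function.update_eq_self i x'
    rw [hupd] at hdev
    have h3 : 0 ≤ pcost a B x' i := pcost_nonneg ha0 hB0 _ _
    nlinarith [hdev]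
  -- load relations
  have hLx : ∀ s, load x' s = load x s + (if t = s then 1 else 0) := by
    intro s; rw [load_ext x x' hx s, ht]
  have hzy := update_ext x x' hx i hik r
  have hy'k : Function.update x' i r k = x' k := Function.update_of_ne (Ne.symm hik) _ _
  have hLzy : ∀ s, load (Function.update x' i r) s
      = load (Function.update x ⟨i, hik⟩ r) s + (if t = s then 1 else 0) := by
    intro s
    rw [load_ext _ _ hzy s, hy'k, ht]
  have hz : ∀ s, load (Function.update x ⟨i, hik⟩ r) s + (if u = s then 1 else 0)
      = load x s + (if r = s then 1 else 0) := by
    intro s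
    have h := load_update x ⟨i, hik⟩ r s
    rwa [hxu] at h
  have hzr : load (Function.update x ⟨i, hik⟩ r) r = load x r + 1 := by
    have h := hz r
    rw [if_pos rfl, if_neg (fun h' : u = r => hru h'.symm)] at h
    omega
  have hzu : load (Function.update x ⟨i, hik⟩ r) u + 1 = load x u := by
    have h := hz u
    rw [if_pos rfl, if_neg hru] at h
    omega
  have hzo : ∀ s, s ≠ u → s ≠ r → load (Function.update x ⟨i, hik⟩ r) s = load x s := by
    intro s h1 h2
    have h := hz s
    rw [if_neg (fun h' => h1 h'.symm), if_neg (fun h' => h2 h'.symm)] at h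
    omega
  -- pcost formulas
  have hPx : pcost a B x ⟨i, hik⟩ = a u * (load x u : ℝ) + kappa B x u := by
    unfold pcost rcost; rw [hxu]
  have hx'u : load x' u = load x u := by
    have h := hLx u
    rw [if_neg (fun h' => hut h'.symm)] at h
    omega
  have hPx' : pcost a B x' i = a u * (load x u : ℝ) + kappa B x' u := by
    unfold pcost rcost; rw [hu, hx'u]
  have hPz : pcost a B (Function.update x ⟨i, hik⟩ r) ⟨i, hik⟩
      = a r * ((load x r : ℝ) + 1) + kappa B (Function.update x ⟨i, hik⟩ r) r := by
    unfold pcost rcost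
    rw [Function.update_self, hzr]
    push_cast; ring
  have kmono1 : kappa B x' u ≤ kappa B x u := kappa_add_le hB0 hLx hut
  -- Step 2 : r ≠ t
  have hrt : r ≠ t := by
    intro hrtt
    have hy'r : load (Function.update x' i r) r = load x r + 2 := by
      have h := hLzy r
      rw [if_pos hrtt.symm, hzr] at h
      omega
    have hPy : pcost a B (Function.update x' i r) i
        = a r * ((load x r : ℝ) + 2) + kappa B (Function.update x' i r) r := by
      unfold pcost rcost
      rw [Function.update_self, hy'r]
      push_cast; ring
    have kmono2 : kappa B (Function.update x ⟨i, hik⟩ r) r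
        ≤ kappa B (Function.update x' i r) r := by
      have h := kappa_le_kappa_add_self (t := t) hB0 hLzy
      rwa [← hrtt] at h
    have hP := hpne ⟨i, hik⟩ r
    rw [hPx, hPz] at hP
    rw [hPx', hPy] at hdev
    have e1 : 0 ≤ K * a r := mul_nonneg (le_of_lt hK0) (ha0 r)
    have e2 : K * kappa B (Function.update x ⟨i, hik⟩ r) r
        ≤ K * kappa B (Function.update x' i r) r :=
      mul_le_mul_of_nonneg_left kmono2 (le_of_lt hK0)
    nlinarith [hP, hdev, kmono1]
  refine ⟨hut, hrt, ?_⟩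
  -- main inequalities
  have hy'r : load (Function.update x' i r) r = load x r + 1 := by
    have h := hLzy r
    rw [if_neg (fun h' => hrt h'.symm), hzr] at h
    omega
  have hPy : pcost a B (Function.update x' i r) i
      = a r * ((load x r : ℝ) + 1) + kappa B (Function.update x' i r) r := by
    unfold pcost rcost
    rw [Function.update_self, hy'r]
    push_cast; ring
  have hP := hpne ⟨i, hik⟩ r
  rw [hPx, hPz] at hP
  rw [hPx', hPy] at hdev
  have hkey : kappa B (Function.update x' i r) r
      < kappa B (Function.update x ⟨i, hik⟩ r) r := by
    nlinarith [hP, hdev, kmono1, hK0]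
  have hzrmax : load (Function.update x ⟨i, hik⟩ r) r
      = maxLoad (Function.update x ⟨i, hik⟩ r) := by
    by_contra hc
    have h0 := kappa_nonneg hB0 (Function.update x' i r) r
    have : kappa B (Function.update x ⟨i, hik⟩ r) r = 0 := by rw [kappa, if_neg hc]
    linarith
  have hx'r : load x' r = load x r := by
    have h := hLx r
    rw [if_neg (fun h' => hrt h'.symm)] at h
    omega
  have hle := load_le_maxLoad x t
  have hleu := load_le_maxLoad x u
  have hler := load_le_maxLoad x r
  have hcase : load x t = maxLoad x ∨ load x t + 1 = maxLoad x
      ∨ load x t + 2 = maxLoad x ∨ load x t + 3 ≤ maxLoad x := by omega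
  rcases hcase with hca | hca | hca | hca
  · -- CASE c : load x t = M
    obtain ⟨hM2, hnm2, hk0, hkt⟩ := addK_max hLx hca
    have hκ'u : kappa B x' u = 0 := hk0 B u hut
    by_cases hrM : load x r = maxLoad x
    · exact Or.inr (Or.inr ⟨hca, Or.inl ⟨hleu, by rw [hx'r, hrM]⟩⟩)
    · have hzmax : maxLoad (Function.update x ⟨i, hik⟩ r) = maxLoad x := by
        apply maxLoad_eq_of
        · intro s
          by_cases h1 : s = u
          · subst h1; omega
          · by_cases h2 : s = r
            · subst h2; rw [hzr]; omega
            · rw [hzo s h1 h2]; exact load_le_maxLoad x s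
        · exact ⟨t, by rw [hzo t (Ne.symm hut) (Ne.symm hrt)]; exact hca⟩
      have hzt : load (Function.update x ⟨i, hik⟩ r) t
          = maxLoad (Function.update x ⟨i, hik⟩ r) := by
        rw [hzo t (Ne.symm hut) (Ne.symm hrt), hzmax]; exact hca
      obtain ⟨-, -, hk0', -⟩ := addK_max hLzy hzt
      have hκy'r : kappa B (Function.update x' i r) r = 0 := hk0' B r hrt
      have hrM1 : load x r + 1 = maxLoad x := by rw [← hzr, hzrmax, hzmax]
      have huM : load x u ≠ maxLoad x := by
        intro huM
        have hur : u < r := by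
          by_contra hc
          push_neg at hc
          have := hdec r u hc
          omega
        have haur : a u ≤ a r := ha (le_of_lt hur)
        rw [hκ'u, hκy'r] at hdev
        have hcast : (load x u : ℝ) = (load x r : ℝ) + 1 := by
          exact_mod_cast congrArg (Nat.cast (R := ℝ)) (by omega : load x u = load x r + 1)
        rw [hcast] at hdev
        have c1 : a u * ((load x r : ℝ) + 1) ≤ a r * ((load x r : ℝ) + 1) :=
          mul_le_mul_of_nonneg_right haur (by positivity)
        have c2 : a r * ((load x r : ℝ) + 1) ≤ K * (a r * ((load x r : ℝ) + 1)) :=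
          le_mul_of_one_le_left (mul_nonneg (ha0 r) (by positivity)) (le_of_lt hK1)
        linarith only [hdev, c1, c2]
      exact Or.inr (Or.inr ⟨hca, Or.inr ⟨lt_of_le_of_ne hleu huM, by rw [hx'r]; exact hrM1⟩⟩)
  · -- CASE b : load x t + 1 = M
    obtain ⟨hM2, hnm2⟩ := addK_next hLx hca
    have hκ'u : kappa B x' u = if load x u = maxLoad x then B / ((numMax x : ℝ) + 1) else 0 := by
      rw [kappa, hx'u, hM2, hnm2]
      norm_num
    by_cases hrM : load x r = maxLoad x
    · exfalso
      have hzmax : maxLoad (Function.update x ⟨i, hik⟩ r) = maxLoad x + 1 := by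
        apply maxLoad_eq_of
        · intro s
          by_cases h1 : s = u
          · subst h1; omega
          · by_cases h2 : s = r
            · subst h2; rw [hzr]; omega
            · rw [hzo s h1 h2]; have := load_le_maxLoad x s; omega
        · exact ⟨r, by rw [hzr, hrM]⟩
      have hlt : load (Function.update x ⟨i, hik⟩ r) t + 1
          < maxLoad (Function.update x ⟨i, hik⟩ r) := by
        rw [hzo t (Ne.symm hut) (Ne.symm hrt), hzmax]; omega
      have heq := (addK_low hLzy hlt).2.2 B r hrt
      exact (ne_of_lt hkey) heq
    by_cases hrM1 : load x r + 1 = maxLoad x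
    · -- conclusion (b); first rule out load x u = maxLoad x
      have huM : load x u ≠ maxLoad x := by
        intro huM
        have hzmax : maxLoad (Function.update x ⟨i, hik⟩ r) = maxLoad x := by
          apply maxLoad_eq_of
          · intro s
            by_cases h1 : s = u
            · subst h1; omega
            · by_cases h2 : s = r
              · subst h2; rw [hzr]; omega
              · rw [hzo s h1 h2]; exact load_le_maxLoad x s
          · exact ⟨r, by rw [hzr]; exact hrM1⟩
        have hnx : load (Function.update x ⟨i, hik⟩ r) t + 1
            = maxLoad (Function.update x ⟨i, hik⟩ r) := by
          rw [hzo t (Ne.symm hut) (Ne.symm hrt), hzmax]; exact hca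
        obtain ⟨hMy, hnmy⟩ := addK_next hLzy hnx
        have hκy'r : kappa B (Function.update x' i r) r
            = B / ((numMax (Function.update x ⟨i, hik⟩ r) : ℝ) + 1) := by
          rw [kappa, hy'r, hMy, hzmax, if_pos hrM1, hnmy]
          norm_num
        have hsub : Finset.univ.filter (fun s => load (Function.update x ⟨i, hik⟩ r) s
              = maxLoad (Function.update x ⟨i, hik⟩ r))
            ⊆ insert r ((Finset.univ.filter (fun s => load x s = maxLoad x)).erase u) := by
          intro s hs
          simp only [Finset.mem_filter, Finset.mem_univ, true_and] at hs
          rw [hzmax] at hs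
          by_cases hsr : s = r
          · subst hsr; exact Finset.mem_insert_self _ _
          · have hsu : s ≠ u := by
              intro h; subst h; omega
            rw [hzo s hsu hsr] at hs
            exact Finset.mem_insert_of_mem (Finset.mem_erase.mpr ⟨hsu, by
              simp only [Finset.mem_filter, Finset.mem_univ, true_and]; exact hs⟩)
        have hpz : numMax (Function.update x ⟨i, hik⟩ r) ≤ numMax x := by
          have h1 := Finset.card_le_card hsub
          have h2 := Finset.card_insert_le r
            ((Finset.univ.filter (fun s => load x s = maxLoad x)).erase u)
          have h3 : ((Finset.univ.filter (fun s => load x s = maxLoad x)).erase u).card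
              = (Finset.univ.filter (fun s => load x s = maxLoad x)).card - 1 :=
            Finset.card_erase_of_mem (by
              simp only [Finset.mem_filter, Finset.mem_univ, true_and]; exact huM)
          have h4 := one_le_numMax x
          unfold numMax at *
          omega
        have hur : u < r := by
          by_contra hc
          push_neg at hc
          have := hdec r u hc
          omega
        have haur : a u ≤ a r := ha (le_of_lt hur)
        rw [hκ'u, if_pos huM, hκy'r] at hdev
        have hcast : (load x u : ℝ) = (load x r : ℝ) + 1 := by
          exact_mod_cast congrArg (Nat.cast (R := ℝ)) (by omega : load x u = load x r + 1)
        rw [hcast] at hdev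
        have hpz' : (numMax (Function.update x ⟨i, hik⟩ r) : ℝ) ≤ (numMax x : ℝ) := by
          exact_mod_cast hpz
        have d1 : B / ((numMax x : ℝ) + 1)
            ≤ B / ((numMax (Function.update x ⟨i, hik⟩ r) : ℝ) + 1) := by
          gcongr
        have c1 : a u * ((load x r : ℝ) + 1) ≤ a r * ((load x r : ℝ) + 1) :=
          mul_le_mul_of_nonneg_right haur (by positivity)
        have c2 : a r * ((load x r : ℝ) + 1) ≤ K * (a r * ((load x r : ℝ) + 1)) :=
          le_mul_of_one_le_left (mul_nonneg (ha0 r) (by positivity)) (le_of_lt hK1)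
        have c3 : K * (B / ((numMax x : ℝ) + 1))
            ≤ K * (B / ((numMax (Function.update x ⟨i, hik⟩ r) : ℝ) + 1)) :=
          mul_le_mul_of_nonneg_left d1 (le_of_lt hK0)
        have c4 : (0:ℝ) < (K - 1) * (B / ((numMax x : ℝ) + 1)) :=
          mul_pos (by linarith) (by positivity)
        linarith only [hdev, c1, c2, c3, c4]
      exact Or.inr (Or.inl ⟨hca, lt_of_le_of_ne hleu huM, by rw [hx'r]; exact hrM1⟩)
    · -- load x r + 2 ≤ maxLoad x : impossible
      exfalso
      by_cases honly : ∀ s, load x s = maxLoad x → s = u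
      · have huM : load x u = maxLoad x := by
          obtain ⟨s0, hs0⟩ := exists_load_eq_maxLoad x
          rw [← honly s0 hs0]; exact hs0
        have hfu : Finset.univ.filter (fun s => load x s = maxLoad x) = {u} := by
          ext s
          simp only [Finset.mem_filter, Finset.mem_univ, true_and, Finset.mem_singleton]
          exact ⟨fun h => honly s h, fun h => by rw [h]; exact huM⟩
        have hp1 : numMax x = 1 := by rw [numMax, hfu, Finset.card_singleton]
        have hzmax : maxLoad (Function.update x ⟨i, hik⟩ r) = load x t := by
          apply maxLoad_eq_of
          · intro s
            by_cases h1 : s = u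
            · subst h1; omega
            · by_cases h2 : s = r
              · subst h2; rw [hzr]; omega
              · rw [hzo s h1 h2]
                have h3 := load_le_maxLoad x s
                have h4 : load x s ≠ maxLoad x := fun h => h1 (honly s h)
                omega
          · exact ⟨t, hzo t (Ne.symm hut) (Ne.symm hrt)⟩
        have hzt : load (Function.update x ⟨i, hik⟩ r) t
            = maxLoad (Function.update x ⟨i, hik⟩ r) := by
          rw [hzmax]; exact hzo t (Ne.symm hut) (Ne.symm hrt)
        obtain ⟨-, -, hk0', -⟩ := addK_max hLzy hzt
        have hκy'r : kappa B (Function.update x' i r) r = 0 := hk0' B r hrt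
        have hpz3 : 3 ≤ numMax (Function.update x ⟨i, hik⟩ r) := by
          have hsubset : ({u, t, r} : Finset (Fin m)) ⊆ Finset.univ.filter
              (fun s => load (Function.update x ⟨i, hik⟩ r) s
                = maxLoad (Function.update x ⟨i, hik⟩ r)) := by
            intro s hs
            simp only [Finset.mem_insert, Finset.mem_singleton] at hs
            simp only [Finset.mem_filter, Finset.mem_univ, true_and]
            rcases hs with h | h | h
            · subst h; rw [hzmax]; omega
            · subst h; exact hzt
            · subst h; exact hzrmax
          have hcard : ({u, t, r} : Finset (Fin m)).card = 3 := by
            rw [Finset.card_insert_of_notMem (by simp [hut, Ne.symm hru]),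
              Finset.card_insert_of_notMem (by simp [Ne.symm hrt]),
              Finset.card_singleton]
          calc 3 = ({u, t, r} : Finset (Fin m)).card := hcard.symm
            _ ≤ _ := Finset.card_le_card hsubset
        have hκzr : kappa B (Function.update x ⟨i, hik⟩ r) r
            = B / (numMax (Function.update x ⟨i, hik⟩ r) : ℝ) := by
          rw [kappa, if_pos hzrmax]
        have hκxu : kappa B x u = B := by
          rw [kappa, if_pos huM, hp1]; norm_num
        rw [hκ'u, if_pos huM, hp1, hκy'r] at hdev
        rw [hκxu, hκzr] at hP
        push_cast at hdev
        have hpz' : (3:ℝ) ≤ (numMax (Function.update x ⟨i, hik⟩ r) : ℝ) := by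
          exact_mod_cast hpz3
        have e1 : B / (numMax (Function.update x ⟨i, hik⟩ r) : ℝ) ≤ B / 3 := by
          gcongr
        have e2 : K * (B / (numMax (Function.update x ⟨i, hik⟩ r) : ℝ)) ≤ K * (B / 3) :=
          mul_le_mul_of_nonneg_left e1 (le_of_lt hK0)
        have e3 : (0:ℝ) < (3 / 2 - K) * B := mul_pos (by linarith) hB
        linarith only [hdev, hP, e2, e3]
      · push_neg at honly
        obtain ⟨s0, hs0M, hs0u⟩ := honly
        have hs0r : s0 ≠ r := by intro h; subst h; omega
        have hs0t : s0 ≠ t := by intro h; subst h; omega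
        have hzmax : maxLoad (Function.update x ⟨i, hik⟩ r) = maxLoad x := by
          apply maxLoad_eq_of
          · intro s
            by_cases h1 : s = u
            · subst h1; omega
            · by_cases h2 : s = r
              · subst h2; rw [hzr]; omega
              · rw [hzo s h1 h2]; exact load_le_maxLoad x s
          · exact ⟨s0, by rw [hzo s0 hs0u hs0r]; exact hs0M⟩
        have : load x r + 1 = maxLoad x := by rw [← hzr, hzrmax, hzmax]
        exact hrM1 this
  · -- CASE a : load x t + 2 = M
    by_cases honly : ∀ s, load x s = maxLoad x → s = u
    · have huM : load x u = maxLoad x := by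
        obtain ⟨s0, hs0⟩ := exists_load_eq_maxLoad x
        rw [← honly s0 hs0]; exact hs0
      have hrMne : load x r ≠ maxLoad x := fun h => hru (honly r h)
      have hr1 : load x r + 1 ≠ maxLoad x := by
        intro hr1
        have hzmax : maxLoad (Function.update x ⟨i, hik⟩ r) = maxLoad x := by
          apply maxLoad_eq_of
          · intro s
            by_cases h1 : s = u
            · subst h1; omega
            · by_cases h2 : s = r
              · subst h2; rw [hzr]; omega
              · rw [hzo s h1 h2]; exact load_le_maxLoad x s
          · exact ⟨r, by rw [hzr]; exact hr1⟩
        have hlt : load (Function.update x ⟨i, hik⟩ r) t + 1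
            < maxLoad (Function.update x ⟨i, hik⟩ r) := by
          rw [hzo t (Ne.symm hut) (Ne.symm hrt), hzmax]; omega
        exact (ne_of_lt hkey) ((addK_low hLzy hlt).2.2 B r hrt)
      have h1 := load_le_maxLoad (Function.update x ⟨i, hik⟩ r) u
      have h2 := hzrmax
      rw [hzr] at h2
      have hr2 : load x r + 2 = maxLoad x := by omega
      exact Or.inl ⟨hca, huM, by rw [hx'r]; omega, huM, honly⟩
    · push_neg at honly
      obtain ⟨s0, hs0M, hs0u⟩ := honly
      exfalso
      have hge : maxLoad x ≤ maxLoad (Function.update x ⟨i, hik⟩ r) := by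
        by_cases h2 : s0 = r
        · have hrM : load x r = maxLoad x := by rw [← h2]; exact hs0M
          have := load_le_maxLoad (Function.update x ⟨i, hik⟩ r) r
          rw [hzr] at this
          omega
        · have := load_le_maxLoad (Function.update x ⟨i, hik⟩ r) s0
          rw [hzo s0 hs0u h2] at this
          omega
      have hlt : load (Function.update x ⟨i, hik⟩ r) t + 1
          < maxLoad (Function.update x ⟨i, hik⟩ r) := by
        rw [hzo t (Ne.symm hut) (Ne.symm hrt)]
        omega
      exact (ne_of_lt hkey) ((addK_low hLzy hlt).2.2 B r hrt)
  · -- CASE impossible : load x t + 3 ≤ M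
    exfalso
    obtain ⟨s0, hs0⟩ := exists_load_eq_maxLoad x
    have hge : maxLoad x ≤ maxLoad (Function.update x ⟨i, hik⟩ r) + 1 := by
      by_cases h1 : s0 = u
      · have huM : load x u = maxLoad x := by rw [← h1]; exact hs0
        have := load_le_maxLoad (Function.update x ⟨i, hik⟩ r) u
        omega
      · by_cases h2 : s0 = r
        · have hrM : load x r = maxLoad x := by rw [← h2]; exact hs0
          have := load_le_maxLoad (Function.update x ⟨i, hik⟩ r) r
          rw [hzr] at this; omega
        · have := load_le_maxLoad (Function.update x ⟨i, hik⟩ r) s0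
          rw [hzo s0 h1 h2] at this; omega
    have hlt : load (Function.update x ⟨i, hik⟩ r) t + 1
        < maxLoad (Function.update x ⟨i, hik⟩ r) := by
      rw [hzo t (Ne.symm hut) (Ne.symm hrt)]
      omega
    exact (ne_of_lt hkey) ((addK_low hLzy hlt).2.2 B r hrt)


/-- necessary conditions (Lemma "cond1") on the loads when some
player i ≠ k has a K-improving deviation after player k is added on a best
response to a K-approximate PNE of the (n−1)-player game with nonincreasing
loads. -/
theorem newly_unhappy_player_cases (n m : ℕ) (hn : 2 ≤ n)
    (a : Fin m → ℝ) (ha0 : ∀ r, 0 ≤ a r) (ha : Monotone a)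
    (B : ℝ) (hB : 0 < B) (K : ℝ) (hK : K ^ 3 = K ^ 2 / 2 + 1)
    (x' : Fin n → Fin m) (k : Fin n)
    (x : {i : Fin n // i ≠ k} → Fin m)
    (hx : ∀ i : {i : Fin n // i ≠ k}, x i = x' i.1)
    (hdec : ∀ r s : Fin m, r ≤ s → load x s ≤ load x r)
    (hpne : isApproxPNE a B K x)
    (hbr : ∀ r : Fin m, pcost a B x' k ≤ pcost a B (Function.update x' k r) k)
    (i : Fin n) (hik : i ≠ k) (r : Fin m)
    (hdev : pcost a B x' i > K * pcost a B (Function.update x' i r) i) :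
    x' i ≠ x' k ∧ r ≠ x' k ∧
      ((load x (x' k) + 2 = maxLoad x ∧ load x (x' i) = maxLoad x ∧
          load x' r + 2 = maxLoad x ∧ onlyMax x (x' i)) ∨
       (load x (x' k) + 1 = maxLoad x ∧ load x (x' i) < maxLoad x ∧
          load x' r + 1 = maxLoad x) ∨
       (load x (x' k) = maxLoad x ∧
          ((load x (x' i) ≤ maxLoad x ∧ load x' r = maxLoad x) ∨
           (load x (x' i) < maxLoad x ∧ load x' r + 1 = maxLoad x)))) := newly_unhappy_player_cases_aux n m hn a ha0 ha B hB K hK x' k x hx hdec hpne hbr i hik r hdev
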